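/- Let f and κ : ℝ → EReal be k-convex with speedp(f*) > −∞, let C ⊆ ℝ be a convex set with ψ̄ = sup C ∈ (0, +∞], let χ = χ_C, and set g = max(nat(nat f + χ), κ) (pointwise maximum). Assume g(θ₀) < +∞ for some θ₀. Then g(θ) = +∞ for every θ > 0 with θ ∉ C⁺, and for every θ > 0 with θ ∈ C⁺: g(θ)/θ = inf {max(f(φ)/φ, κ(θ)/θ) : φ ∈ ℝ, 0 < φ ≤ θ, φ ≤ ψ̄} (infimum in EReal). -/

import Mathlib

open Set Filter Topology

noncomputable section

/-- `f : ℝ → EReal` is convex iff its epigraph is a convex set. -/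
def EConvex (f : ℝ → EReal) : Prop :=
  Convex ℝ {p : ℝ × ℝ | f p.1 ≤ (p.2 : EReal)}

/-- The Fenchel dual `f*(a) = sup_θ (θ·a − f(θ))`. -/
def Fd (f : ℝ → EReal) : ℝ → EReal :=
  fun a => ⨆ θ : ℝ, ((θ * a : ℝ) : EReal) - f θ

/-- The sweep `f°`: strictly positive values are swept to `+∞`. -/
def sweep (f : ℝ → EReal) : ℝ → EReal :=
  fun a => if f a ≤ 0 then f a else ⊤

/-- `speedp f = inf {a | f a > 0}`, as an extended real. -/
def speedp (f : ℝ → EReal) : EReal :=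
  sInf ((fun a : ℝ => (a : EReal)) '' {a : ℝ | 0 < f a})

/-- k-convex functions. -/
def KConvex (f : ℝ → EReal) : Prop :=
  EConvex f ∧ (∃ θ : ℝ, 0 < θ ∧ f θ < ⊤) ∧ (∀ θ : ℝ, θ < 0 → f θ = ⊤)

/-- The closure `cl f`: the greatest lower semicontinuous function beneath `f`. -/
def ecl (f : ℝ → EReal) : ℝ → EReal :=
  fun x => ⨆ g : {g : ℝ → EReal // LowerSemicontinuous g ∧ ∀ y, g y ≤ f y}, g.1 x

/-- r-functions: increasing, convex, somewhere in `(−∞,0)`, left continuous,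
and `+∞` whenever strictly positive. -/
def RFunction (r : ℝ → EReal) : Prop :=
  Monotone r ∧ EConvex r ∧ (∃ a : ℝ, ⊥ < r a ∧ r a < 0) ∧
    (∀ a : ℝ, ContinuousWithinAt r (Set.Iio a) a) ∧
    (∀ a : ℝ, 0 < r a → r a = ⊤)

/-- The greatest lower semicontinuous convex function beneath `f` and `g`. -/
def cv (f g : ℝ → EReal) : ℝ → EReal :=
  fun x => ⨆ h : {h : ℝ → EReal //
    LowerSemicontinuous h ∧ EConvex h ∧ (∀ y, h y ≤ f y) ∧ (∀ y, h y ≤ g y)}, h.1 x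

/-- `enat f`: the pointwise sup of convex minorants `g` of `f` with `g θ / θ`
antitone on `(0,∞)`. -/
def enat (f : ℝ → EReal) : ℝ → EReal :=
  fun x => ⨆ g : {g : ℝ → EReal // EConvex g ∧ (∀ y, g y ≤ f y) ∧
      AntitoneOn (fun θ : ℝ => g θ * ((θ⁻¹ : ℝ) : EReal)) (Set.Ioi 0)}, g.1 x

/-- `varthetapp f = sup {θ | f θ = enat f θ}`. -/
def varthetapp (f : ℝ → EReal) : EReal :=
  sSup ((fun θ : ℝ => (θ : EReal)) '' {θ : ℝ | f θ = enat f θ})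

/-- `flt f = ((f*)°)*`. -/
def flt (f : ℝ → EReal) : ℝ → EReal := Fd (sweep (Fd f))

/-- The set where `f` is finite. -/
def Phi (f : ℝ → EReal) : Set ℝ := {θ : ℝ | f θ < ⊤}

/-- `A⁺`: points in `A` or above a point of `A`. -/
def plusSet (A : Set ℝ) : Set ℝ := {x : ℝ | ∃ a ∈ A, a ≤ x}

/-- The subdifferential of `f` at `φ`. -/
def esubdiff (f : ℝ → EReal) (φ : ℝ) : Set ℝ :=
  {a : ℝ | ∀ θ : ℝ, f φ + ((a * (θ - φ) : ℝ) : EReal) ≤ f θ}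

open Classical in
/-- The convex indicator of a set: `0` on `C` and `+∞` off it. -/
def echi (C : Set ℝ) : ℝ → EReal := fun θ => if θ ∈ C then 0 else ⊤

/-!
For a convex `f` that is `+∞` on `(-∞, 0)`, the greatest convex minorant with antitone ratio
`θ ↦ f θ / θ` is `x ↦ x · inf_{0 < φ ≤ x} f φ / φ` on `(0, ∞)`: this is the partial minimisation
over `s ≥ 1` of the jointly convex perspective `(y, s) ↦ s f(y / s)`. Applied to `f` and to
`F = nat f + χ_C` (convex and `> -∞`, as `nat f` lies above the linear minorant of `f` that
`speedp (f*) > -∞` provides), it gives `nat F θ / θ = inf f φ / φ` over `φ ≤ c`, `c ∈ C ∩ (0, θ]`.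
As `C` is an interval meeting `(-∞, θ]`, these `φ` fill `(0, min θ (sup C)]` except possibly a
non-attained `sup C`; there the value is recovered as a limit from the left along a chord of `f`,
starting at a point of finiteness below `C` that exists because `g` is finite somewhere.
Left of `C`, `F` and hence `nat F` is `+∞`, and the maximum with `κ θ / θ` commutes with `inf`.
-/

namespace EReal

lemma mul_coe_inv_le_iff {A K : EReal} {x : ℝ} (hx : 0 < x) :
    A * ((x⁻¹ : ℝ) : EReal) ≤ K ↔ A ≤ K * x := by
  rw [EReal.coe_inv, ← div_eq_mul_inv, EReal.div_le_iff_le_mul (EReal.coe_pos.2 hx)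
    (EReal.coe_ne_top x), mul_comm]

lemma le_mul_coe_inv_iff {A K : EReal} {x : ℝ} (hx : 0 < x) :
    K ≤ A * ((x⁻¹ : ℝ) : EReal) ↔ K * x ≤ A := by
  rw [EReal.coe_inv, ← div_eq_mul_inv, EReal.le_div_iff_mul_le (EReal.coe_pos.2 hx)
    (EReal.coe_ne_top x)]

lemma coe_mul_mul_coe_inv (A : EReal) {x : ℝ} (hx : x ≠ 0) :
    (x : EReal) * A * ((x⁻¹ : ℝ) : EReal) = A := by
  rw [mul_comm (x : EReal), mul_assoc, ← EReal.coe_mul, mul_inv_cancel₀ hx, EReal.coe_one,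
    mul_one]

lemma coe_inv_pos {x : ℝ} (hx : 0 < x) : (0 : EReal) < ((x⁻¹ : ℝ) : EReal) :=
  EReal.coe_pos.2 (inv_pos.2 hx)

end EReal

lemma EConvex.apply_combo_le {f : ℝ → EReal} (hf : EConvex f) {x₁ x₂ c₁ c₂ a b : ℝ}
    (h₁ : f x₁ ≤ c₁) (h₂ : f x₂ ≤ c₂) (ha : 0 ≤ a) (hb : 0 ≤ b) (hab : a + b = 1) :
    f (a * x₁ + b * x₂) ≤ ((a * c₁ + b * c₂ : ℝ) : EReal) :=
  hf (x := (x₁, c₁)) (y := (x₂, c₂)) h₁ h₂ ha hb hab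

section enat

variable {f : ℝ → EReal}

lemma enat_le (f : ℝ → EReal) (x : ℝ) : enat f x ≤ f x :=
  iSup_le fun g => g.2.2.1 x

lemma le_enat {g : ℝ → EReal} (hg : EConvex g) (hgf : ∀ y, g y ≤ f y)
    (hanti : AntitoneOn (fun θ : ℝ => g θ * ((θ⁻¹ : ℝ) : EReal)) (Ioi 0)) (x : ℝ) :
    g x ≤ enat f x :=
  le_iSup (fun g : {g : ℝ → EReal // EConvex g ∧ (∀ y, g y ≤ f y) ∧
      AntitoneOn (fun θ : ℝ => g θ * ((θ⁻¹ : ℝ) : EReal)) (Ioi 0)} => g.1 x) ⟨g, hg, hgf, hanti⟩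

lemma econvex_enat (f : ℝ → EReal) : EConvex (enat f) := by
  have : {p : ℝ × ℝ | enat f p.1 ≤ (p.2 : EReal)} =
      ⋂ g : {g : ℝ → EReal // EConvex g ∧ (∀ y, g y ≤ f y) ∧
        AntitoneOn (fun θ : ℝ => g θ * ((θ⁻¹ : ℝ) : EReal)) (Ioi 0)},
        {p : ℝ × ℝ | g.1 p.1 ≤ (p.2 : EReal)} := by
    ext p
    simp [enat, iSup_le_iff]
  rw [EConvex, this]
  exact convex_iInter fun g => g.2.1

lemma antitoneOn_enat_mul_inv (f : ℝ → EReal) :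
    AntitoneOn (fun θ : ℝ => enat f θ * ((θ⁻¹ : ℝ) : EReal)) (Ioi 0) := by
  intro x hx y hy hxy
  refine (EReal.mul_coe_inv_le_iff hy).2 (iSup_le fun g => ?_)
  refine (EReal.mul_coe_inv_le_iff hy).1 ((g.2.2.2 hx hy hxy).trans ?_)
  exact mul_le_mul_of_nonneg_right (le_enat g.2.1 g.2.2.1 g.2.2.2 x) (EReal.coe_inv_pos hx).le

lemma enat_eq_top_of_forall_le {x : ℝ} (h : ∀ y ≤ x, f y = ⊤) : enat f x = ⊤ := by
  let step : ℝ → EReal := fun y => if y ≤ x then ⊤ else ⊥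
  have hstep : {p : ℝ × ℝ | step p.1 ≤ (p.2 : EReal)} = Prod.fst ⁻¹' Ioi x := by
    ext ⟨y, t⟩
    by_cases hy : y ≤ x
    · simp [step, hy]
    · simp [step, hy, not_le.1 hy]
  refine top_le_iff.1 ((if_pos le_rfl).symm.trans_le (le_enat (g := step) ?_ ?_ ?_ x))
  · rw [EConvex, hstep]
    exact (convex_Ioi x).linear_preimage (LinearMap.fst ℝ ℝ ℝ)
  · intro y
    by_cases hy : y ≤ x <;> simp [step, hy, h]
  · intro u hu v hv huv
    by_cases hu' : u ≤ x
    · simp [step, hu', EReal.top_mul_of_pos (EReal.coe_inv_pos hu)]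
    · have hv' : ¬ v ≤ x := fun hv' => hu' (huv.trans hv')
      simp [step, hv', EReal.bot_mul_of_pos (EReal.coe_inv_pos hv)]

lemma exists_le_lt_top_of_enat_lt_top {x : ℝ} (h : enat f x < ⊤) : ∃ y ≤ x, f y < ⊤ := by
  by_contra! hf
  exact h.ne (enat_eq_top_of_forall_le fun y hy => top_le_iff.1 (hf y hy))

lemma linear_le_enat {a : ℝ} (h : ∀ y, ((y * a : ℝ) : EReal) ≤ f y) (x : ℝ) :
    ((x * a : ℝ) : EReal) ≤ enat f x := by
  refine le_enat (g := fun y => ((y * a : ℝ) : EReal)) ?_ h ?_ x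
  · rintro ⟨x₁, t₁⟩ hp ⟨x₂, t₂⟩ hq u v hu hv -
    simp only [mem_ofPred_eq, Prod.smul_mk, Prod.mk_add_mk, smul_eq_mul,
      EReal.coe_le_coe_iff] at hp hq ⊢
    nlinarith [mul_le_mul_of_nonneg_left hp hu, mul_le_mul_of_nonneg_left hq hv]
  · intro u (hu : 0 < u) v (hv : 0 < v) _
    simp only [← EReal.coe_mul, mul_right_comm _ a, mul_inv_cancel₀ hu.ne',
      mul_inv_cancel₀ hv.ne', le_refl]

lemma exists_linear_minorant (hΓ : ⊥ < speedp (Fd f)) :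
    ∃ a : ℝ, ∀ x : ℝ, ((x * a : ℝ) : EReal) ≤ f x := by
  obtain ⟨a, -, ha⟩ := EReal.exists_between_coe_real hΓ
  refine ⟨a, fun x => ?_⟩
  have hFd : Fd f a ≤ 0 := by
    by_contra! h
    have : speedp (Fd f) ≤ a := sInf_le ⟨a, h, rfl⟩
    exact this.not_gt ha
  have h1 : ((x * a : ℝ) : EReal) - f x ≤ 0 :=
    (le_iSup (fun θ : ℝ => ((θ * a : ℝ) : EReal) - f θ) x).trans hFd
  simpa using (EReal.sub_le_iff_le_add (Or.inr (by simp)) (Or.inr (by simp))).1 h1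

end enat

section ratioHull

variable {f : ℝ → EReal}

def ratioInf (f : ℝ → EReal) (x : ℝ) : EReal :=
  ⨅ φ ∈ Ioc 0 x, f φ * ((φ⁻¹ : ℝ) : EReal)

lemma ratioInf_le {φ x : ℝ} (hφ : 0 < φ) (hφx : φ ≤ x) :
    ratioInf f x ≤ f φ * ((φ⁻¹ : ℝ) : EReal) :=
  iInf₂_le φ ⟨hφ, hφx⟩

lemma antitone_ratioInf (f : ℝ → EReal) : Antitone (ratioInf f) :=
  fun _ _ hxy => biInf_mono fun _ hφ => ⟨hφ.1, hφ.2.trans hxy⟩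

lemma enat_mul_inv_le_ratioInf {x : ℝ} (hx : 0 < x) :
    enat f x * ((x⁻¹ : ℝ) : EReal) ≤ ratioInf f x :=
  le_iInf₂ fun _ ⟨hφ, hφx⟩ => (antitoneOn_enat_mul_inv f hφ hx hφx).trans
    (mul_le_mul_of_nonneg_right (enat_le f _) (EReal.coe_inv_pos hφ).le)

def ratioHull (f : ℝ → EReal) (y : ℝ) : EReal :=
  if 0 < y then y * ratioInf f y else f y

lemma ratioHull_of_pos {y : ℝ} (hy : 0 < y) : ratioHull f y = y * ratioInf f y := if_pos hy

lemma ratioHull_of_nonpos {y : ℝ} (hy : y ≤ 0) : ratioHull f y = f y := if_neg hy.not_gt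

lemma ratioHull_le (y : ℝ) : ratioHull f y ≤ f y := by
  rcases le_or_gt y 0 with hy | hy
  · rw [ratioHull_of_nonpos hy]
  · rw [ratioHull_of_pos hy]
    calc (y : EReal) * ratioInf f y ≤ y * (f y * ((y⁻¹ : ℝ) : EReal)) :=
          mul_le_mul_of_nonneg_left (ratioInf_le hy le_rfl) (EReal.coe_pos.2 hy).le
      _ = f y := by rw [← mul_assoc, EReal.coe_mul_mul_coe_inv _ hy.ne']

lemma antitoneOn_ratioHull_mul_inv :
    AntitoneOn (fun θ : ℝ => ratioHull f θ * ((θ⁻¹ : ℝ) : EReal)) (Ioi 0) := by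
  intro x hx y hy hxy
  simp only [ratioHull_of_pos hx, ratioHull_of_pos hy, EReal.coe_mul_mul_coe_inv _ hx.ne',
    EReal.coe_mul_mul_coe_inv _ hy.ne']
  exact antitone_ratioInf f hxy

lemma ratioHull_mul_le {φ s : ℝ} (hφ : 0 < φ) (hs : 1 ≤ s) :
    ratioHull f (s * φ) ≤ s * f φ := by
  have hsφ : 0 < s * φ := by positivity
  rw [ratioHull_of_pos hsφ]
  calc ((s * φ : ℝ) : EReal) * ratioInf f (s * φ)
      ≤ ((s * φ : ℝ) : EReal) * (f φ * ((φ⁻¹ : ℝ) : EReal)) :=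
        mul_le_mul_of_nonneg_left (ratioInf_le hφ (le_mul_of_one_le_left hφ.le hs))
          (EReal.coe_pos.2 hsφ).le
    _ = s * ((φ : EReal) * f φ * ((φ⁻¹ : ℝ) : EReal)) := by
        rw [EReal.coe_mul]; ac_rfl
    _ = s * f φ := by rw [EReal.coe_mul_mul_coe_inv _ hφ.ne']

lemma exists_ratioHull_witness {x t u : ℝ} (hx : 0 ≤ x) (h : ratioHull f x ≤ t) (htu : t < u) :
    ∃ φ s : ℝ, 1 ≤ s ∧ s * φ = x ∧ f φ ≤ ((u / s : ℝ) : EReal) := by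
  rcases hx.eq_or_lt with rfl | hx
  · refine ⟨0, 1, le_rfl, by ring, ?_⟩
    rw [ratioHull_of_nonpos le_rfl] at h
    exact h.trans (by rw [div_one]; exact_mod_cast htu.le)
  rw [ratioHull_of_pos hx, mul_comm, ← EReal.le_mul_coe_inv_iff hx] at h
  have hlt : ratioInf f x < ((u * x⁻¹ : ℝ) : EReal) := h.trans_lt <| by
    rw [← EReal.coe_mul]; exact_mod_cast mul_lt_mul_of_pos_right htu (inv_pos.2 hx)
  obtain ⟨φ, hφ⟩ := iInf_lt_iff.1 hlt
  obtain ⟨⟨hφ0, hφx⟩, hφ⟩ := iInf_lt_iff.1 hφ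
  refine ⟨φ, x / φ, (one_le_div hφ0).2 hφx, div_mul_cancel₀ x hφ0.ne', ?_⟩
  have := (EReal.mul_coe_inv_le_iff hφ0).1 hφ.le
  rw [← EReal.coe_mul] at this
  convert this using 2
  field_simp

/-- Joint convexity of the perspective `(y, s) ↦ s · f (y / s)`, with the scales `s₁, s₂`
blended into `a s₁ + b s₂`. -/
lemma ratioHull_combo_le (hf : EConvex f) {a b φ₁ φ₂ s₁ s₂ c₁ c₂ : ℝ}
    (ha : 0 ≤ a) (hb : 0 ≤ b) (hab : a + b = 1)
    (hs₁ : 1 ≤ s₁) (hs₂ : 1 ≤ s₂) (h₁ : f φ₁ ≤ c₁) (h₂ : f φ₂ ≤ c₂)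
    (hpos : 0 < a * (s₁ * φ₁) + b * (s₂ * φ₂)) :
    ratioHull f (a * (s₁ * φ₁) + b * (s₂ * φ₂)) ≤
      ((a * (s₁ * c₁) + b * (s₂ * c₂) : ℝ) : EReal) := by
  set S := a * s₁ + b * s₂
  have hS : 1 ≤ S := by nlinarith
  have hS0 : 0 < S := by linarith
  have hφ : 0 < (a * (s₁ * φ₁) + b * (s₂ * φ₂)) / S := div_pos hpos hS0
  have hcombo := hf.apply_combo_le h₁ h₂ (div_nonneg (mul_nonneg ha (by linarith)) hS0.le)
    (div_nonneg (mul_nonneg hb (by linarith)) hS0.le)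
    (show a * s₁ / S + b * s₂ / S = 1 by rw [← add_div, div_self hS0.ne'])
  calc ratioHull f (a * (s₁ * φ₁) + b * (s₂ * φ₂))
      = ratioHull f (S * ((a * (s₁ * φ₁) + b * (s₂ * φ₂)) / S)) := by
        rw [mul_div_cancel₀ _ hS0.ne']
    _ ≤ S * f ((a * (s₁ * φ₁) + b * (s₂ * φ₂)) / S) := ratioHull_mul_le hφ hS
    _ ≤ S * ((a * s₁ / S * c₁ + b * s₂ / S * c₂ : ℝ) : EReal) := by
        refine mul_le_mul_of_nonneg_left (le_of_eq_of_le ?_ hcombo) (EReal.coe_pos.2 hS0).le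
        congr 2
        field_simp
    _ = ((a * (s₁ * c₁) + b * (s₂ * c₂) : ℝ) : EReal) := by
        rw [← EReal.coe_mul]
        congr 1
        field_simp

lemma econvex_ratioHull (hf : EConvex f) (hneg : ∀ x < 0, f x = ⊤) : EConvex (ratioHull f) := by
  refine convex_iff_forall_pos.2 ?_
  rintro ⟨x₁, t₁⟩ hp ⟨x₂, t₂⟩ hq a b ha hb hab
  simp only [mem_ofPred_eq, Prod.smul_mk, Prod.mk_add_mk, smul_eq_mul] at hp hq ⊢
  have hnonneg : ∀ {x t : ℝ}, ratioHull f x ≤ t → 0 ≤ x := fun {x t} h => by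
    by_contra! hx
    rw [ratioHull_of_nonpos hx.le, hneg x hx, top_le_iff] at h
    exact EReal.coe_ne_top t h
  have hx₁ := hnonneg hp
  have hx₂ := hnonneg hq
  rcases (add_nonneg (mul_nonneg ha.le hx₁) (mul_nonneg hb.le hx₂)).eq_or_lt with h0 | hpos
  · obtain ⟨rfl, rfl⟩ : x₁ = 0 ∧ x₂ = 0 := by constructor <;> nlinarith
    rw [ratioHull_of_nonpos le_rfl] at hp hq
    simpa [ratioHull_of_nonpos] using hf.apply_combo_le hp hq ha.le hb.le hab
  refine EReal.le_of_forall_lt_iff_le.1 fun z hz => ?_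
  have hδ : 0 < z - (a * t₁ + b * t₂) := sub_pos.2 (EReal.coe_lt_coe_iff.1 hz)
  obtain ⟨φ₁, s₁, hs₁, rfl, h₁⟩ := exists_ratioHull_witness hx₁ hp (lt_add_of_pos_right t₁ hδ)
  obtain ⟨φ₂, s₂, hs₂, rfl, h₂⟩ := exists_ratioHull_witness hx₂ hq (lt_add_of_pos_right t₂ hδ)
  refine (ratioHull_combo_le hf ha.le hb.le hab hs₁ hs₂ h₁ h₂ hpos).trans_eq ?_
  congr 1
  field_simp
  linear_combination (z - (a * t₁ + b * t₂)) * hab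

lemma ratioInf_le_enat (hf : EConvex f) (hneg : ∀ x < 0, f x = ⊤) {x : ℝ} (hx : 0 < x) :
    x * ratioInf f x ≤ enat f x := by
  rw [← ratioHull_of_pos hx]
  exact le_enat (econvex_ratioHull hf hneg) ratioHull_le antitoneOn_ratioHull_mul_inv x

theorem enat_mul_inv_eq_ratioInf (hf : EConvex f) (hneg : ∀ x < 0, f x = ⊤) {x : ℝ}
    (hx : 0 < x) : enat f x * ((x⁻¹ : ℝ) : EReal) = ratioInf f x :=
  (enat_mul_inv_le_ratioInf hx).antisymm <| (EReal.le_mul_coe_inv_iff hx).2 <| by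
    rw [mul_comm]; exact ratioInf_le_enat hf hneg hx

end ratioHull

section echi

variable {h : ℝ → EReal} {C : Set ℝ}

lemma echi_ne_bot (C : Set ℝ) (x : ℝ) : echi C x ≠ ⊥ := by
  unfold echi; split_ifs <;> simp

lemma add_echi_of_mem {x : ℝ} (hx : x ∈ C) : h x + echi C x = h x := by
  simp [echi, hx]

lemma add_echi_of_notMem {x : ℝ} (hbot : h x ≠ ⊥) (hx : x ∉ C) : h x + echi C x = ⊤ := by
  simp [echi, hx, EReal.add_top_of_ne_bot hbot]

lemma EConvex.add_echi (hh : EConvex h) (hbot : ∀ x, h x ≠ ⊥) (hC : Convex ℝ C) :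
    EConvex (fun x => h x + echi C x) := by
  have : {p : ℝ × ℝ | h p.1 + echi C p.1 ≤ (p.2 : EReal)} =
      Prod.fst ⁻¹' C ∩ {p : ℝ × ℝ | h p.1 ≤ (p.2 : EReal)} := by
    ext ⟨x, t⟩
    by_cases hx : x ∈ C
    · simp [add_echi_of_mem hx, hx]
    · simp [add_echi_of_notMem (hbot x) hx, hx]
  rw [EConvex, this]
  exact (hC.linear_preimage (LinearMap.fst ℝ ℝ ℝ)).inter hh

lemma ratioInf_add_echi (hbot : ∀ x, h x ≠ ⊥) (θ : ℝ) :
    ratioInf (fun x => h x + echi C x) θ = ⨅ c ∈ C ∩ Ioc 0 θ, h c * ((c⁻¹ : ℝ) : EReal) := by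
  refine le_antisymm (le_iInf₂ fun c ⟨hcC, hc⟩ => ?_) (le_iInf₂ fun c hc => ?_)
  · exact (iInf₂_le c hc).trans_eq (by dsimp only; rw [add_echi_of_mem hcC])
  · dsimp only
    by_cases hcC : c ∈ C
    · exact (iInf₂_le c ⟨hcC, hc⟩).trans_eq (by rw [add_echi_of_mem hcC])
    · rw [add_echi_of_notMem (hbot c) hcC, EReal.top_mul_of_pos (EReal.coe_inv_pos hc.1)]
      exact le_top

end echi

/-- Along the chord from a point `x₀` where it is finite, a convex `f` is upper semicontinuous
from the left at `φ`. -/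
lemma EConvex.biInf_Ioo_mul_inv_le {f : ℝ → EReal} (hf : EConvex f) {x₀ y φ : ℝ}
    (hx₀φ : x₀ < φ) (hyφ : y < φ) (hφ : 0 < φ) (hx₀ : f x₀ < ⊤) :
    ⨅ x ∈ Ioo y φ, f x * ((x⁻¹ : ℝ) : EReal) ≤ f φ * ((φ⁻¹ : ℝ) : EReal) := by
  obtain ⟨c₀, hc₀, -⟩ := EReal.exists_between_coe_real hx₀
  refine EReal.le_of_forall_lt_iff_le.1 fun z hz => ?_
  have ht : f φ ≤ (z * φ : ℝ) := by
    rw [EReal.coe_mul]; exact (EReal.mul_coe_inv_le_iff hφ).1 hz.le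
  let x : ℝ → ℝ := fun l => l * x₀ + (1 - l) * φ
  let bound : ℝ → ℝ := fun l => (l * c₀ + (1 - l) * (z * φ)) * (x l)⁻¹
  have hx : Tendsto x (𝓝[>] 0) (𝓝 φ) :=
    tendsto_nhdsWithin_of_tendsto_nhds ((by fun_prop : Continuous x).tendsto' 0 φ (by simp [x]))
  have hnum : Tendsto (fun l : ℝ => l * c₀ + (1 - l) * (z * φ)) (𝓝[>] 0) (𝓝 (z * φ)) :=
    tendsto_nhdsWithin_of_tendsto_nhds ((by fun_prop : Continuous
      fun l : ℝ => l * c₀ + (1 - l) * (z * φ)).tendsto' 0 _ (by simp))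
  have hbound : Tendsto bound (𝓝[>] 0) (𝓝 z) := by
    simpa [bound, mul_inv_cancel_right₀ hφ.ne'] using hnum.mul (hx.inv₀ hφ.ne')
  refine ge_of_tendsto (EReal.tendsto_coe.2 hbound) ?_
  filter_upwards [hx.eventually_const_lt (max_lt hyφ hφ), Ioo_mem_nhdsGT (zero_lt_one' ℝ)]
    with l hl ⟨hl0, hl1⟩
  have hxl : 0 < x l := (le_max_right _ _).trans_lt hl
  refine (iInf₂_le (x l) ⟨(le_max_left _ _).trans_lt hl, ?_⟩).trans ?_
  · rw [show ((bound l : ℝ) : EReal) = ((l * c₀ + (1 - l) * (z * φ) : ℝ) : EReal) * ((x l)⁻¹ : ℝ)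
      from EReal.coe_mul _ _]
    exact mul_le_mul_of_nonneg_right (hf.apply_combo_le hc₀.le ht hl0.le (by linarith) (by ring))
      (EReal.coe_inv_pos hxl).le
  · simp only [x]; nlinarith

section restriction

variable {f : ℝ → EReal} {C : Set ℝ}

lemma Convex.mem_of_le_of_lt_sSup (hC : Convex ℝ C) {a x : ℝ} (ha : a ∈ C) (hax : a ≤ x)
    (hx : (x : EReal) < sSup ((fun c : ℝ => (c : EReal)) '' C)) : x ∈ C := by
  obtain ⟨_, ⟨c, hc, rfl⟩, hxc⟩ := lt_sSup_iff.1 hx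
  exact hC.ordConnected.out ha hc ⟨hax, (EReal.coe_lt_coe_iff.1 hxc).le⟩

/-- The two index sets differ at most in a non-attained `φ = sup C`, where the ratio is a limit
from the left. -/
theorem biInf_ratioInf_eq (hf : EConvex f) (hC : Convex ℝ C) {a θ : ℝ} (ha : a ∈ C)
    (haθ : a ≤ θ) (hdom : ∃ y ∈ C, ∃ x ≤ y, f x < ⊤) :
    ⨅ c ∈ C ∩ Ioc 0 θ, ratioInf f c =
      ⨅ φ ∈ {φ : ℝ | 0 < φ ∧ φ ≤ θ ∧ (φ : EReal) ≤ sSup ((fun c : ℝ => (c : EReal)) '' C)},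
        f φ * ((φ⁻¹ : ℝ) : EReal) := by
  refine le_antisymm (le_iInf₂ fun φ ⟨hφ, hφθ, hφC⟩ => ?_)
    (le_iInf₂ fun c ⟨hcC, hc, hcθ⟩ => le_iInf₂ fun φ ⟨hφ, hφc⟩ => iInf₂_le φ
      ⟨hφ, hφc.trans hcθ, (EReal.coe_le_coe_iff.2 hφc).trans (le_sSup ⟨c, hcC, rfl⟩)⟩)
  by_cases hφ_le : ∃ c ∈ C, φ ≤ c
  · obtain ⟨c, hcC, hφc⟩ := hφ_le
    have hmin : min c θ ∈ C := by
      rcases le_total c θ with h | h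
      · rwa [min_eq_left h]
      · rw [min_eq_right h]; exact hC.ordConnected.out ha hcC ⟨haθ, h⟩
    have hφmin : φ ≤ min c θ := le_min hφc hφθ
    exact (iInf₂_le _ ⟨hmin, hφ.trans_le hφmin, min_le_right c θ⟩).trans (ratioInf_le hφ hφmin)
  push Not at hφ_le
  obtain ⟨y, hyC, x₀, hx₀y, hx₀⟩ := hdom
  calc ⨅ c ∈ C ∩ Ioc 0 θ, ratioInf f c
      ≤ ⨅ x ∈ Ioo (max a 0) φ, f x * ((x⁻¹ : ℝ) : EReal) := by
        refine le_iInf₂ fun x ⟨hx, hxφ⟩ => ?_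
        have hxC : x ∈ C := hC.mem_of_le_of_lt_sSup ha (le_max_left a 0 |>.trans hx.le)
          ((EReal.coe_lt_coe_iff.2 hxφ).trans_le hφC)
        have hx0 : 0 < x := (le_max_right a 0).trans_lt hx
        exact (iInf₂_le x ⟨hxC, hx0, hxφ.le.trans hφθ⟩).trans (ratioInf_le hx0 le_rfl)
    _ ≤ f φ * ((φ⁻¹ : ℝ) : EReal) :=
        hf.biInf_Ioo_mul_inv_le (hx₀y.trans_lt (hφ_le y hyC)) (max_lt (hφ_le a ha) hφ) hφ hx₀

end restriction

theorem gtot_general (f κ : ℝ → EReal) (hf : KConvex f)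
    (hΓ : ⊥ < speedp (Fd f))
    (C : Set ℝ) (hC : Convex ℝ C)
    (g : ℝ → EReal)
    (hg : g = fun θ => max (enat (fun x => enat f x + echi C x) θ) (κ θ))
    (hfin : ∃ θ₀ : ℝ, g θ₀ < ⊤) :
    (∀ θ : ℝ, 0 < θ → θ ∉ plusSet C → g θ = ⊤) ∧
    (∀ θ : ℝ, 0 < θ → θ ∈ plusSet C →
      g θ * ((θ⁻¹ : ℝ) : EReal) =
        sInf {v : EReal | ∃ φ : ℝ, 0 < φ ∧ φ ≤ θ ∧
          (φ : EReal) ≤ sSup ((fun x : ℝ => (x : EReal)) '' C) ∧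
          v = max (f φ * ((φ⁻¹ : ℝ) : EReal)) (κ θ * ((θ⁻¹ : ℝ) : EReal))}) := by
  obtain ⟨hconv, -, hneg⟩ := hf
  obtain ⟨a, ha⟩ := exists_linear_minorant hΓ
  have hbot (x : ℝ) : enat f x ≠ ⊥ :=
    ne_bot_of_le_ne_bot (EReal.coe_ne_bot _) (linear_le_enat ha x)
  subst hg
  dsimp only at hfin ⊢
  refine ⟨fun θ _ hθ => ?_, fun θ hθ ⟨c, hcC, hcθ⟩ => ?_⟩
  · rw [enat_eq_top_of_forall_le fun y hy => add_echi_of_notMem (hbot y) fun hyC => hθ ⟨y, hyC, hy⟩]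
    exact max_eq_left le_top
  have hFneg : ∀ x < 0, enat f x + echi C x = ⊤ := fun x hx => by
    rw [enat_eq_top_of_forall_le fun y hy => hneg y (hy.trans_lt hx)]
    exact EReal.top_add_of_ne_bot (echi_ne_bot C x)
  have hnd : ∃ y ∈ C, ∃ x ≤ y, f x < ⊤ := by
    obtain ⟨θ₀, hθ₀⟩ := hfin
    obtain ⟨y, -, hy⟩ := exists_le_lt_top_of_enat_lt_top ((le_max_left _ _).trans_lt hθ₀)
    by_cases hyC : y ∈ C
    · rw [add_echi_of_mem hyC] at hy
      exact ⟨y, hyC, exists_le_lt_top_of_enat_lt_top hy⟩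
    · exact absurd (add_echi_of_notMem (hbot y) hyC) hy.ne
  have hset : {v : EReal | ∃ φ : ℝ, 0 < φ ∧ φ ≤ θ ∧
      (φ : EReal) ≤ sSup ((fun x : ℝ => (x : EReal)) '' C) ∧
      v = max (f φ * ((φ⁻¹ : ℝ) : EReal)) (κ θ * ((θ⁻¹ : ℝ) : EReal))} =
      (fun φ => max (f φ * ((φ⁻¹ : ℝ) : EReal)) (κ θ * ((θ⁻¹ : ℝ) : EReal))) ''
        {φ : ℝ | 0 < φ ∧ φ ≤ θ ∧ (φ : EReal) ≤ sSup ((fun x : ℝ => (x : EReal)) '' C)} := by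
    ext v
    simp only [mem_ofPred_eq, mem_image, and_assoc, eq_comm]
  rw [hset, sInf_image, ← iInf₂_sup_eq, ← biInf_ratioInf_eq hconv hC hcC hcθ hnd,
    ← biInf_congr fun c hc => enat_mul_inv_eq_ratioInf hconv hneg hc.2.1,
    ← ratioInf_add_echi hbot,
    ← enat_mul_inv_eq_ratioInf ((econvex_enat f).add_echi hbot hC) hFneg hθ]
  exact Monotone.map_max fun _ _ h => mul_le_mul_of_nonneg_right h (EReal.coe_inv_pos hθ).le

/-- Lemma `gtot`: formula for `g(θ)/θ` where
`g = max (nat (nat f + χ_C)) κ`, assuming `g` is finite somewhere. -/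
theorem gtot (f κ : ℝ → EReal) (hf : KConvex f) (hκ : KConvex κ)
    (hΓ : ⊥ < speedp (Fd f))
    (C : Set ℝ) (hC : Convex ℝ C)
    (hψ : 0 < sSup ((fun x : ℝ => (x : EReal)) '' C))
    (g : ℝ → EReal)
    (hg : g = fun θ => max (enat (fun x => enat f x + echi C x) θ) (κ θ))
    (hfin : ∃ θ₀ : ℝ, g θ₀ < ⊤) :
    (∀ θ : ℝ, 0 < θ → θ ∉ plusSet C → g θ = ⊤) ∧
    (∀ θ : ℝ, 0 < θ → θ ∈ plusSet C →
      g θ * ((θ⁻¹ : ℝ) : EReal) =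
        sInf {v : EReal | ∃ φ : ℝ, 0 < φ ∧ φ ≤ θ ∧
          (φ : EReal) ≤ sSup ((fun x : ℝ => (x : EReal)) '' C) ∧
          v = max (f φ * ((φ⁻¹ : ℝ) : EReal)) (κ θ * ((θ⁻¹ : ℝ) : EReal))}) :=
  gtot_general f κ hf hΓ C hC g hg hfin
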